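/- Let a and b be integers (not necessarily coprime) and n an odd prime. If n does not divide λ_n(a,b), then λ_n(a,b) ≡ 1 (mod n). -/

import Mathlib

/-! Reflecting the sum shows that `λ_n(a, b)` is the geometric sum `∑ aⁱ (-b)ⁿ⁻¹⁻ⁱ`, so
`λ_n(a, b) · (a + b) = aⁿ - (-b)ⁿ`. Modulo a prime `n`, Fermat applied to `a` and `-b` turns
the right-hand side into `a + b`, so `λ_n(a, b) ≡ 1` as soon as `a + b` is invertible mod `n`.
If instead `b ≡ -a`, every term of `λ_n(a, b)` is `≡ aⁿ⁻¹`, so `λ_n(a, b) ≡ n aⁿ⁻¹ ≡ 0`. -/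

def lambdaPoly (n : ℕ) (a b : ℤ) : ℤ :=
  ∑ i ∈ Finset.range n, (-1) ^ i * a ^ (n - 1 - i) * b ^ i

open Finset

theorem lambdaPoly_eq_geom_sum₂ (n : ℕ) (a b : ℤ) :
    lambdaPoly n a b = ∑ i ∈ range n, a ^ i * (-b) ^ (n - 1 - i) := by
  rw [← sum_range_reflect]
  refine sum_congr rfl fun i hi => ?_
  rw [Nat.sub_sub_self (Nat.le_sub_one_of_lt (mem_range.mp hi)), neg_pow]
  ring

theorem lambdaPoly_mul_add (n : ℕ) (a b : ℤ) :
    lambdaPoly n a b * (a + b) = a ^ n - (-b) ^ n := by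
  rw [lambdaPoly_eq_geom_sum₂, ← geom_sum₂_mul, sub_neg_eq_add]

theorem lambdaPoly_neg_right (n : ℕ) (a : ℤ) : lambdaPoly n a (-a) = n * a ^ (n - 1) := by
  have hterm : ∀ i ∈ range n, (-1) ^ i * a ^ (n - 1 - i) * (-a) ^ i = a ^ (n - 1) := by
    intro i hi
    rw [neg_pow a, mul_mul_mul_comm, ← mul_pow, neg_one_mul, neg_neg, one_pow, one_mul, ← pow_add,
      Nat.sub_add_cancel (Nat.le_sub_one_of_lt (mem_range.mp hi))]
  rw [lambdaPoly, sum_congr rfl hterm, sum_const, card_range, nsmul_eq_mul]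

theorem intCast_lambdaPoly_congr_right {R : Type*} [CommRing R] (n : ℕ) (a : ℤ) {b b' : ℤ}
    (h : (b : R) = b') : (lambdaPoly n a b : R) = lambdaPoly n a b' := by
  simp only [lambdaPoly, Int.cast_sum, Int.cast_mul, Int.cast_pow, h]

section ZModPrime

variable {p : ℕ} [Fact p.Prime]

theorem intCast_lambdaPoly_mul_add (a b : ℤ) :
    (lambdaPoly p a b : ZMod p) * (a + b) = a + b := by
  have h := congrArg (Int.cast : ℤ → ZMod p) (lambdaPoly_mul_add p a b)
  push_cast at h
  rwa [ZMod.pow_card, ZMod.pow_card, sub_neg_eq_add] at h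

theorem intCast_lambdaPoly_eq_zero_of_add_eq_zero {a b : ℤ} (h : (a + b : ZMod p) = 0) :
    (lambdaPoly p a b : ZMod p) = 0 := by
  have hb : (b : ZMod p) = ((-a : ℤ) : ZMod p) := by
    rw [Int.cast_neg]
    exact eq_neg_of_add_eq_zero_right h
  rw [intCast_lambdaPoly_congr_right p a hb, lambdaPoly_neg_right]
  push_cast
  rw [ZMod.natCast_self, zero_mul]

end ZModPrime

theorem stmt_18_general (a b : ℤ) (n : ℕ) (hn : n.Prime)
    (hndvd : ¬ (n : ℤ) ∣ lambdaPoly n a b) :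
    lambdaPoly n a b ≡ 1 [ZMOD (n : ℤ)] := by
  have : Fact n.Prime := ⟨hn⟩
  rw [← ZMod.intCast_eq_intCast_iff, Int.cast_one]
  rw [← ZMod.intCast_zmod_eq_zero_iff_dvd] at hndvd
  have hab : (a + b : ZMod n) ≠ 0 := fun h =>
    hndvd (intCast_lambdaPoly_eq_zero_of_add_eq_zero h)
  exact mul_right_cancel₀ hab ((intCast_lambdaPoly_mul_add a b).trans (one_mul _).symm)

theorem stmt_18 (a b : ℤ) (n : ℕ) (hn : n.Prime) (hodd : Odd n)
    (hndvd : ¬ (n : ℤ) ∣ lambdaPoly n a b) :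
    lambdaPoly n a b ≡ 1 [ZMOD (n : ℤ)] :=
  stmt_18_general a b n hn hndvd
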